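/- Let M₁ be a graded R₁-module, M₂ a graded R₂-module, R = R₁ × R₂, M = M₁ × M₂, s = (s₁, s₂) a nonzero homogeneous element of R, and L = N × K a graded R-submodule of M. Then L is graded s-prime in M if and only if (N is graded s₁-prime in M₁ and s₂ ∈ (K :_{R₂} M₂)) or (K is graded s₂-prime in M₂ and s₁ ∈ (N :_{R₁} M₁)). -/

import Mathlib

open DirectSum

variable {G R M : Type*}

/-- A submodule is graded if it contains all homogeneous components of its elements. -/
def IsGradedSubmodule [CommRing R] [AddCommGroup M] [Module R M] [DecidableEq G]
    (ℳ : G → AddSubgroup M) [DirectSum.Decomposition ℳ] (N : Submodule R M) : Prop :=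
  ∀ m ∈ N, ∀ g : G, (DirectSum.decompose ℳ m g : M) ∈ N

/-- A graded ideal of a graded ring. -/
def IsGradedIdeal [CommRing R] [DecidableEq G]
    (𝒜 : G → AddSubgroup R) [DirectSum.Decomposition 𝒜] (P : Ideal R) : Prop :=
  ∀ r ∈ P, ∀ g : G, (DirectSum.decompose 𝒜 r g : R) ∈ P

/-- `N` is a graded `s`-prime submodule: `s ∉ (N :_R M)` and for homogeneous `r`, `m`,
`r • m ∈ N` implies `s * r ∈ (N :_R M)` or `s • m ∈ N`. -/
def IsGradedSPrime [CommRing R] [AddCommGroup M] [Module R M]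
    (𝒜 : G → AddSubgroup R) (ℳ : G → AddSubgroup M) (s : R) (N : Submodule R M) : Prop :=
  s ∉ N.colon ⊤ ∧
  ∀ (r : R) (m : M), SetLike.IsHomogeneousElem 𝒜 r → SetLike.IsHomogeneousElem ℳ m →
    r • m ∈ N → s * r ∈ N.colon ⊤ ∨ s • m ∈ N

/-- `P` is a graded `s`-prime ideal. -/
def IsGradedSPrimeIdeal [CommRing R]
    (𝒜 : G → AddSubgroup R) (s : R) (P : Ideal R) : Prop :=
  s ∉ P ∧
  ∀ a b : R, SetLike.IsHomogeneousElem 𝒜 a → SetLike.IsHomogeneousElem 𝒜 b →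
    a * b ∈ P → s * a ∈ P ∨ s * b ∈ P

/-- `K` is a graded prime submodule. -/
def IsGradedPrime [CommRing R] [AddCommGroup M] [Module R M]
    (𝒜 : G → AddSubgroup R) (ℳ : G → AddSubgroup M) (K : Submodule R M) : Prop :=
  K ≠ ⊤ ∧
  ∀ (r : R) (m : M), SetLike.IsHomogeneousElem 𝒜 r → SetLike.IsHomogeneousElem ℳ m →
    r • m ∈ K → r ∈ K.colon ⊤ ∨ m ∈ K

section Prod

variable {R₁ R₂ M₁ M₂ : Type*} [CommRing R₁] [CommRing R₂]
  [AddCommGroup M₁] [AddCommGroup M₂] [Module R₁ M₁] [Module R₂ M₂]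

/-- `M₁` as a module over `R₁ × R₂` via the first projection. -/
instance prodFstModule : Module (R₁ × R₂) M₁ := Module.compHom M₁ (RingHom.fst R₁ R₂)

/-- `M₂` as a module over `R₁ × R₂` via the second projection. -/
instance prodSndModule : Module (R₁ × R₂) M₂ := Module.compHom M₂ (RingHom.snd R₁ R₂)

/-- The product `N × K` as an `(R₁ × R₂)`-submodule of `M₁ × M₂`. -/
def prodSubmodule (N : Submodule R₁ M₁) (K : Submodule R₂ M₂) :
    Submodule (R₁ × R₂) (M₁ × M₂) where
  carrier := {p | p.1 ∈ N ∧ p.2 ∈ K}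
  add_mem' := fun h h' => ⟨N.add_mem h.1 h'.1, K.add_mem h.2 h'.2⟩
  zero_mem' := ⟨N.zero_mem, K.zero_mem⟩
  smul_mem' := fun r _ h => ⟨N.smul_mem r.1 h.1, K.smul_mem r.2 h.2⟩

@[simp]
theorem prodFstModule_smul (r : R₁ × R₂) (m : M₁) : r • m = r.1 • m := rfl

@[simp]
theorem prodSndModule_smul (r : R₁ × R₂) (m : M₂) : r • m = r.2 • m := rfl

@[simp]
theorem mem_prodSubmodule {N : Submodule R₁ M₁} {K : Submodule R₂ M₂} {p : M₁ × M₂} :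
    p ∈ prodSubmodule N K ↔ p.1 ∈ N ∧ p.2 ∈ K := Iff.rfl

theorem mem_colon_prodSubmodule {N : Submodule R₁ M₁} {K : Submodule R₂ M₂} {a : R₁} {b : R₂} :
    (a, b) ∈ (prodSubmodule N K).colon ⊤ ↔ a ∈ N.colon ⊤ ∧ b ∈ K.colon ⊤ := by
  simp only [Submodule.mem_colon, Set.top_eq_univ, Set.mem_univ, true_implies]
  constructor
  · intro h
    exact ⟨fun m => (h (m, 0)).1, fun n => (h (0, n)).2⟩
  · rintro ⟨h₁, h₂⟩ p
    exact ⟨h₁ p.1, h₂ p.2⟩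

section Homogeneous

variable {ι A B : Type*} [AddGroup A] [AddGroup B] {𝒜 : ι → AddSubgroup A}
  {ℬ : ι → AddSubgroup B} {a : A} {b : B}

theorem SetLike.IsHomogeneousElem.prod_fst
    (h : IsHomogeneousElem (fun i => (𝒜 i).prod (ℬ i)) (a, b)) : IsHomogeneousElem 𝒜 a :=
  let ⟨i, hi⟩ := h; ⟨i, (AddSubgroup.mem_prod.1 hi).1⟩

theorem SetLike.IsHomogeneousElem.prod_snd
    (h : IsHomogeneousElem (fun i => (𝒜 i).prod (ℬ i)) (a, b)) : IsHomogeneousElem ℬ b :=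
  let ⟨i, hi⟩ := h; ⟨i, (AddSubgroup.mem_prod.1 hi).2⟩

theorem SetLike.IsHomogeneousElem.prod_mk_zero (h : IsHomogeneousElem 𝒜 a) :
    IsHomogeneousElem (fun i => (𝒜 i).prod (ℬ i)) (a, 0) :=
  let ⟨i, hi⟩ := h; ⟨i, AddSubgroup.mem_prod.2 ⟨hi, zero_mem _⟩⟩

theorem SetLike.IsHomogeneousElem.zero_prod_mk (h : IsHomogeneousElem ℬ b) :
    IsHomogeneousElem (fun i => (𝒜 i).prod (ℬ i)) (0, b) :=
  let ⟨i, hi⟩ := h; ⟨i, AddSubgroup.mem_prod.2 ⟨zero_mem _, hi⟩⟩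

end Homogeneous

theorem Submodule.mem_colon_top_of_forall_isHomogeneousElem {ι R M : Type*} [CommRing R]
    [AddCommGroup M] [Module R M] [DecidableEq ι] (ℳ : ι → AddSubgroup M)
    [DirectSum.Decomposition ℳ] {N : Submodule R M} {r : R}
    (h : ∀ m, SetLike.IsHomogeneousElem ℳ m → r • m ∈ N) : r ∈ N.colon ⊤ := by
  suffices ∀ m, r • m ∈ N from Submodule.mem_colon.2 fun m _ => this m
  intro m
  induction m using DirectSum.Decomposition.inductionOn ℳ with
  | zero => simp
  | homogeneous m => exact h m ⟨_, m.2⟩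
  | add m m' hm hm' => simpa only [smul_add] using N.add_mem hm hm'

section GradedSPrime

variable {𝒜₁ : G → AddSubgroup R₁} {𝒜₂ : G → AddSubgroup R₂}
  {ℳ₁ : G → AddSubgroup M₁} {ℳ₂ : G → AddSubgroup M₂}
  {N : Submodule R₁ M₁} {K : Submodule R₂ M₂} {s₁ : R₁} {s₂ : R₂}

theorem IsGradedSPrime.prodSubmodule_of_fst (hN : IsGradedSPrime 𝒜₁ ℳ₁ s₁ N)
    (hs₂ : s₂ ∈ K.colon ⊤) :
    IsGradedSPrime (fun g => (𝒜₁ g).prod (𝒜₂ g)) (fun g => (ℳ₁ g).prod (ℳ₂ g)) (s₁, s₂)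
      (prodSubmodule N K) := by
  refine ⟨fun h => hN.1 (mem_colon_prodSubmodule.1 h).1, ?_⟩
  rintro ⟨r₁, r₂⟩ ⟨m₁, m₂⟩ hr hm ⟨hrm, -⟩
  rcases hN.2 r₁ m₁ hr.prod_fst hm.prod_fst hrm with h | h
  · exact Or.inl (mem_colon_prodSubmodule.2 ⟨h, Ideal.mul_mem_right _ _ hs₂⟩)
  · exact Or.inr ⟨h, Submodule.mem_colon.1 hs₂ m₂ trivial⟩

theorem IsGradedSPrime.prodSubmodule_of_snd (hK : IsGradedSPrime 𝒜₂ ℳ₂ s₂ K)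
    (hs₁ : s₁ ∈ N.colon ⊤) :
    IsGradedSPrime (fun g => (𝒜₁ g).prod (𝒜₂ g)) (fun g => (ℳ₁ g).prod (ℳ₂ g)) (s₁, s₂)
      (prodSubmodule N K) := by
  refine ⟨fun h => hK.1 (mem_colon_prodSubmodule.1 h).2, ?_⟩
  rintro ⟨r₁, r₂⟩ ⟨m₁, m₂⟩ hr hm ⟨-, hrm⟩
  rcases hK.2 r₂ m₂ hr.prod_snd hm.prod_snd hrm with h | h
  · exact Or.inl (mem_colon_prodSubmodule.2 ⟨Ideal.mul_mem_right _ _ hs₁, h⟩)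
  · exact Or.inr ⟨Submodule.mem_colon.1 hs₁ m₁ trivial, h⟩

theorem IsGradedSPrime.fst_of_prodSubmodule
    (hL : IsGradedSPrime (fun g => (𝒜₁ g).prod (𝒜₂ g)) (fun g => (ℳ₁ g).prod (ℳ₂ g)) (s₁, s₂)
      (prodSubmodule N K))
    (hs₁ : s₁ ∉ N.colon ⊤) : IsGradedSPrime 𝒜₁ ℳ₁ s₁ N := by
  refine ⟨hs₁, fun r m hr hm hrm => ?_⟩
  rcases hL.2 (r, 0) (m, 0) hr.prod_mk_zero hm.prod_mk_zero (by simpa using hrm) with h | h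
  · exact Or.inl (mem_colon_prodSubmodule.1 h).1
  · exact Or.inr h.1

theorem IsGradedSPrime.snd_of_prodSubmodule
    (hL : IsGradedSPrime (fun g => (𝒜₁ g).prod (𝒜₂ g)) (fun g => (ℳ₁ g).prod (ℳ₂ g)) (s₁, s₂)
      (prodSubmodule N K))
    (hs₂ : s₂ ∉ K.colon ⊤) : IsGradedSPrime 𝒜₂ ℳ₂ s₂ K := by
  refine ⟨hs₂, fun r m hr hm hrm => ?_⟩
  rcases hL.2 (0, r) (0, m) hr.zero_prod_mk hm.zero_prod_mk (by simpa using hrm) with h | h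
  · exact Or.inl (mem_colon_prodSubmodule.1 h).2
  · exact Or.inr h.2

-- Testing against `(1, 0) • (0, m) = 0` forces `s₂ • m ∈ K` for homogeneous `m`.
theorem IsGradedSPrime.snd_mem_colon_of_prodSubmodule [Zero G] [SetLike.GradedOne 𝒜₁]
    [DecidableEq G] [DirectSum.Decomposition ℳ₂]
    (hL : IsGradedSPrime (fun g => (𝒜₁ g).prod (𝒜₂ g)) (fun g => (ℳ₁ g).prod (ℳ₂ g)) (s₁, s₂)
      (prodSubmodule N K))
    (hs₁ : s₁ ∉ N.colon ⊤) : s₂ ∈ K.colon ⊤ := by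
  refine Submodule.mem_colon_top_of_forall_isHomogeneousElem ℳ₂ fun m hm => ?_
  rcases hL.2 (1, 0) (0, m) (SetLike.isHomogeneousElem_one 𝒜₁).prod_mk_zero hm.zero_prod_mk
    (by simp) with h | h
  · exact absurd (by simpa using (mem_colon_prodSubmodule.1 h).1) hs₁
  · exact h.2

end GradedSPrime

theorem stmt_14_general [AddGroup G] [DecidableEq G]
    (𝒜₁ : G → AddSubgroup R₁) (𝒜₂ : G → AddSubgroup R₂)
    (ℳ₁ : G → AddSubgroup M₁) (ℳ₂ : G → AddSubgroup M₂)
    [GradedRing 𝒜₁] [GradedRing 𝒜₂]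
    [DirectSum.Decomposition ℳ₁] [DirectSum.Decomposition ℳ₂]
    (N : Submodule R₁ M₁) (K : Submodule R₂ M₂)
    (s₁ : R₁) (s₂ : R₂) :
    IsGradedSPrime (fun g : G => (𝒜₁ g).prod (𝒜₂ g))
        (fun g : G => (ℳ₁ g).prod (ℳ₂ g)) (s₁, s₂) (prodSubmodule N K) ↔
      (IsGradedSPrime 𝒜₁ ℳ₁ s₁ N ∧ s₂ ∈ K.colon ⊤) ∨
      (IsGradedSPrime 𝒜₂ ℳ₂ s₂ K ∧ s₁ ∈ N.colon ⊤) := by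
  constructor
  · intro hL
    by_cases hs₁ : s₁ ∈ N.colon ⊤
    · have hs₂ : s₂ ∉ K.colon ⊤ := fun hs₂ => hL.1 (mem_colon_prodSubmodule.2 ⟨hs₁, hs₂⟩)
      exact Or.inr ⟨hL.snd_of_prodSubmodule hs₂, hs₁⟩
    · exact Or.inl ⟨hL.fst_of_prodSubmodule hs₁, hL.snd_mem_colon_of_prodSubmodule hs₁⟩
  · rintro (⟨hN, hs₂⟩ | ⟨hK, hs₁⟩)
    · exact hN.prodSubmodule_of_fst hs₂
    · exact hK.prodSubmodule_of_snd hs₁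

/-- `L = N × K` is graded `(s₁,s₂)`-prime in `M₁ × M₂` iff (`N` is graded
`s₁`-prime and `s₂ ∈ (K :_{R₂} M₂)`) or (`K` is graded `s₂`-prime and
`s₁ ∈ (N :_{R₁} M₁)`). -/
theorem stmt_14 [AddGroup G] [DecidableEq G]
    (𝒜₁ : G → AddSubgroup R₁) (𝒜₂ : G → AddSubgroup R₂)
    (ℳ₁ : G → AddSubgroup M₁) (ℳ₂ : G → AddSubgroup M₂)
    [GradedRing 𝒜₁] [GradedRing 𝒜₂]
    [DirectSum.Decomposition ℳ₁] [SetLike.GradedSMul 𝒜₁ ℳ₁]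
    [DirectSum.Decomposition ℳ₂] [SetLike.GradedSMul 𝒜₂ ℳ₂]
    (N : Submodule R₁ M₁) (K : Submodule R₂ M₂)
    (hN : IsGradedSubmodule ℳ₁ N) (hK : IsGradedSubmodule ℳ₂ K)
    (s₁ : R₁) (s₂ : R₂) (hs0 : (s₁, s₂) ≠ (0, 0))
    (hsh : SetLike.IsHomogeneousElem (fun g : G => (𝒜₁ g).prod (𝒜₂ g)) (s₁, s₂)) :
    IsGradedSPrime (fun g : G => (𝒜₁ g).prod (𝒜₂ g))
        (fun g : G => (ℳ₁ g).prod (ℳ₂ g)) (s₁, s₂) (prodSubmodule N K) ↔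
      (IsGradedSPrime 𝒜₁ ℳ₁ s₁ N ∧ s₂ ∈ K.colon ⊤) ∨
      (IsGradedSPrime 𝒜₂ ℳ₂ s₂ K ∧ s₁ ∈ N.colon ⊤) :=
  stmt_14_general 𝒜₁ 𝒜₂ ℳ₁ ℳ₂ N K s₁ s₂

end Prod
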